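/- (Lemma S-(A4.2a): projection onto the complement of Λ̃⁽³⁾.) Let D be a 𝒢-measurable ℝ^p-valued random variable with E[D] = 0 and the required integrability, and set V₀ = E[ε₀²] and b = E[Q·D]/V₀ ∈ ℝ^p. Then: (i) V₀ = T* + E[Q²]; (ii) ε₀ is orthogonal to every element of Λ̃⁽³⁾, i.e., E[ε₀ · (Γ* − E[Q·Γ*]·(T*·T)⁻¹·W·ε)] = 0 (componentwise) for every 𝒢-measurable ℝ^p-valued Γ* with E[Γ*] = 0; (iii) D − b·ε₀ ∈ Λ̃⁽³⁾ (realized by Γ* = D − b·Q). Consequently, the orthogonal projection of D onto the orthogonal complement of Λ̃⁽³⁾ equals E[Q·D]·V₀⁻¹·ε₀. -/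

import Mathlib

/-!
Write `ε₀ = u + Q` with `u = T⁻¹Wε`. The factor `T⁻¹W` is bounded and `ℋ`-measurable, so
`E[ε | ℋ] = 0` makes `u` orthogonal to every square-integrable `ℋ`-measurable vector: hence
`E[ε₀ Γ] = E[Q Γ]` for `𝒢`-measurable `Γ`, and `E[ε₀ u] = E[u²]`. The tower property, first over
`ℋ` and then over `𝒢`, gives `E[u²] = E[T⁻²W² E[ε² | ℋ]] = E[T⁻²W] = E[T⁻²T] = T*`.
Therefore `V₀ = T* + E[Q²]`; the coefficient `(T* T)⁻¹Wε = u / T*` has `E[ε₀ u / T*] = 1`, which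
makes `ε₀` orthogonal to every `Γ − (u / T*) E[Q Γ]`; and `Γ = D − Q b` has
`E[Q Γ] = (V₀ − E[Q²]) b = T* b`, which turns `Γ − (u / T*) E[Q Γ]` into `D − ε₀ b`.
-/

open MeasureTheory Set
open scoped ENNReal

theorem inv_mem_Icc_inv {α : Type*} [Field α] [LinearOrder α] [IsStrictOrderedRing α]
    {a b x : α} (ha : 0 < a) (hx : x ∈ Icc a b) : x⁻¹ ∈ Icc b⁻¹ a⁻¹ :=
  ⟨inv_anti₀ (ha.trans_le hx.1) hx.2, inv_anti₀ ha hx.1⟩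

section CondExp

variable {Ω E : Type*} [NormedAddCommGroup E] [NormedSpace ℝ E] [CompleteSpace E]
  {m mΩ : MeasurableSpace Ω} {μ : Measure Ω}

theorem memLp_top_of_ae_mem_Icc {f : Ω → ℝ} {a b : ℝ} (hf : AEStronglyMeasurable f μ)
    (hab : ∀ᵐ ω ∂μ, f ω ∈ Icc a b) : MemLp f ∞ μ :=
  memLp_top_of_bound hf (max |a| |b|) (hab.mono fun _ h => abs_le_max_abs_abs h.1 h.2)

theorem ae_condExp_mem_Icc (hm : m ≤ mΩ) [IsFiniteMeasure μ] {f : Ω → ℝ} {a b : ℝ}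
    (hf : Integrable f μ) (hab : ∀ᵐ ω ∂μ, f ω ∈ Icc a b) : ∀ᵐ ω ∂μ, μ[f|m] ω ∈ Icc a b := by
  have ha := condExp_mono (m := m) (integrable_const a) hf (hab.mono fun _ h => h.1)
  have hb := condExp_mono (m := m) hf (integrable_const b) (hab.mono fun _ h => h.2)
  rw [condExp_const hm] at ha hb
  filter_upwards [ha, hb] with ω h₁ h₂ using ⟨h₁, h₂⟩

theorem integral_condExp_smul_of_stronglyMeasurable_right (hm : m ≤ mΩ)
    [SigmaFinite (μ.trim hm)] {f : Ω → ℝ} {g : Ω → E} (hf : Integrable f μ)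
    (hfg : Integrable (f • g) μ) (hg : StronglyMeasurable[m] g) :
    ∫ ω, μ[f|m] ω • g ω ∂μ = ∫ ω, f ω • g ω ∂μ :=
  (integral_congr_ae
    (condExp_smul_of_aestronglyMeasurable_right hf hfg hg.aestronglyMeasurable).symm).trans
    (integral_condExp hm)

theorem integral_smul_eq_zero_of_condExp_ae_eq_zero (hm : m ≤ mΩ) [SigmaFinite (μ.trim hm)]
    {f : Ω → ℝ} {g : Ω → E} (hf : Integrable f μ) (hf₀ : μ[f|m] =ᵐ[μ] 0)
    (hfg : Integrable (f • g) μ) (hg : StronglyMeasurable[m] g) :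
    ∫ ω, f ω • g ω ∂μ = 0 := by
  rw [← integral_condExp_smul_of_stronglyMeasurable_right hm hf hfg hg]
  exact integral_eq_zero_of_ae (hf₀.mono fun ω h => by simp [h])

theorem integral_mul_smul_eq_zero_of_condExp_ae_eq_zero (hm : m ≤ mΩ) [IsFiniteMeasure μ]
    {B ε : Ω → ℝ} {Γ : Ω → E} (hBm : StronglyMeasurable[m] B) (hB : MemLp B ∞ μ)
    (hε : MemLp ε 2 μ) (hε₀ : μ[ε|m] =ᵐ[μ] 0) (hΓm : StronglyMeasurable[m] Γ)
    (hΓ : MemLp Γ 2 μ) :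
    ∫ ω, (B ω * ε ω) • Γ ω ∂μ = 0 := by
  have hBΓ : MemLp (B • Γ) 2 μ := hΓ.smul hB
  simp_rw [mul_comm (B _), mul_smul]
  exact integral_smul_eq_zero_of_condExp_ae_eq_zero hm (hε.integrable one_le_two) hε₀
    (memLp_one_iff_integrable.1 (hBΓ.smul hε)) (hBm.smul hΓm)

end CondExp

section Projection

variable {Ω E : Type*} [NormedAddCommGroup E] [NormedSpace ℝ E] [CompleteSpace E]
  {mΩ : MeasurableSpace Ω} {μ : Measure Ω}

theorem integral_smul_sub_smul_integral_smul_eq_zero {e c : Ω → ℝ} {Γ : Ω → E}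
    (he : MemLp e 2 μ) (hc : MemLp c 2 μ) (hΓ : MemLp Γ 2 μ) (hec : ∫ ω, e ω * c ω ∂μ = 1) :
    ∫ ω, e ω • (Γ ω - c ω • ∫ ω', e ω' • Γ ω' ∂μ) ∂μ = 0 := by
  have heΓ : Integrable (fun ω => e ω • Γ ω) μ := memLp_one_iff_integrable.1 (hΓ.smul he)
  have hec_int : Integrable (fun ω => e ω * c ω) μ := he.integrable_mul hc
  simp_rw [smul_sub, smul_smul]
  rw [integral_sub heΓ (hec_int.smul_const _), integral_smul_const, hec, one_smul, sub_self]

theorem integral_sub_smul_const_eq_zero {D : Ω → E} {Q : Ω → ℝ} (hD : Integrable D μ)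
    (hQ : Integrable Q μ) (hD₀ : ∫ ω, D ω ∂μ = 0) (hQ₀ : ∫ ω, Q ω ∂μ = 0) (b : E) :
    ∫ ω, (D ω - Q ω • b) ∂μ = 0 := by
  rw [integral_sub hD (hQ.smul_const b), integral_smul_const, hD₀, hQ₀, zero_smul, sub_zero]

theorem sub_add_smul_eq_sub_smul_integral_smul_sub {D : Ω → E} {Q u : Ω → ℝ}
    {b : E} {t : ℝ} (ht : t ≠ 0) (hD : MemLp D 2 μ) (hQ : MemLp Q 2 μ)
    (hQD : ∫ ω, Q ω • D ω ∂μ = (t + ∫ ω, Q ω ^ 2 ∂μ) • b) :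
    (fun ω => D ω - (u ω + Q ω) • b) =
      fun ω => D ω - Q ω • b - (t⁻¹ * u ω) • ∫ ω', Q ω' • (D ω' - Q ω' • b) ∂μ := by
  have hQD_int : Integrable (fun ω => Q ω • D ω) μ := memLp_one_iff_integrable.1 (hD.smul hQ)
  have hQ2 : Integrable (fun ω => Q ω ^ 2) μ := hQ.integrable_sq
  have hΓ : ∫ ω, Q ω • (D ω - Q ω • b) ∂μ = t • b := by
    simp_rw [smul_sub, smul_smul, ← sq]
    rw [integral_sub hQD_int (hQ2.smul_const b), integral_smul_const, hQD, ← sub_smul,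
      add_sub_cancel_right]
  funext ω
  rw [hΓ, smul_smul, mul_assoc, mul_comm (u ω), inv_mul_cancel_left₀ ht, add_smul]
  abel

end Projection

section Residual

variable {Ω E : Type*} [NormedAddCommGroup E] [NormedSpace ℝ E] [CompleteSpace E]
  {m mΩ : MeasurableSpace Ω} {μ : Measure Ω} [IsFiniteMeasure μ] {B ε Q : Ω → ℝ}

theorem integral_mul_add_smul_eq (hm : m ≤ mΩ) (hBm : StronglyMeasurable[m] B)
    (hB : MemLp B ∞ μ) (hε : MemLp ε 2 μ) (hε₀ : μ[ε|m] =ᵐ[μ] 0) (hQ : MemLp Q 2 μ)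
    {Γ : Ω → E} (hΓm : StronglyMeasurable[m] Γ) (hΓ : MemLp Γ 2 μ) :
    ∫ ω, (B ω * ε ω + Q ω) • Γ ω ∂μ = ∫ ω, Q ω • Γ ω ∂μ := by
  have hu : MemLp (fun ω => B ω * ε ω) 2 μ := hε.mul' hB
  have huΓ : Integrable (fun ω => (B ω * ε ω) • Γ ω) μ :=
    memLp_one_iff_integrable.1 (hΓ.smul hu)
  have hQΓ : Integrable (fun ω => Q ω • Γ ω) μ := memLp_one_iff_integrable.1 (hΓ.smul hQ)
  simp_rw [add_smul]
  rw [integral_add huΓ hQΓ,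
    integral_mul_smul_eq_zero_of_condExp_ae_eq_zero hm hBm hB hε hε₀ hΓm hΓ, zero_add]

theorem integral_mul_add_mul_self (hm : m ≤ mΩ) (hBm : StronglyMeasurable[m] B)
    (hB : MemLp B ∞ μ) (hε : MemLp ε 2 μ) (hε₀ : μ[ε|m] =ᵐ[μ] 0) (hQm : StronglyMeasurable[m] Q)
    (hQ : MemLp Q 2 μ) :
    ∫ ω, (B ω * ε ω + Q ω) * (B ω * ε ω) ∂μ = ∫ ω, (B ω * ε ω) ^ 2 ∂μ := by
  have hu : MemLp (fun ω => B ω * ε ω) 2 μ := hε.mul' hB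
  have huQ : Integrable (fun ω => B ω * ε ω * Q ω) μ := hu.integrable_mul hQ
  have huQ₀ := integral_mul_smul_eq_zero_of_condExp_ae_eq_zero hm hBm hB hε hε₀ hQm hQ
  simp only [smul_eq_mul] at huQ₀
  calc ∫ ω, (B ω * ε ω + Q ω) * (B ω * ε ω) ∂μ
      = ∫ ω, ((B ω * ε ω) ^ 2 + B ω * ε ω * Q ω) ∂μ := by congr 1; funext ω; ring
    _ = ∫ ω, (B ω * ε ω) ^ 2 ∂μ := by rw [integral_add hu.integrable_sq huQ, huQ₀, add_zero]

theorem integral_mul_add_sq (hm : m ≤ mΩ) (hBm : StronglyMeasurable[m] B)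
    (hB : MemLp B ∞ μ) (hε : MemLp ε 2 μ) (hε₀ : μ[ε|m] =ᵐ[μ] 0) (hQm : StronglyMeasurable[m] Q)
    (hQ : MemLp Q 2 μ) :
    ∫ ω, (B ω * ε ω + Q ω) ^ 2 ∂μ = ∫ ω, (B ω * ε ω) ^ 2 ∂μ + ∫ ω, Q ω ^ 2 ∂μ := by
  have hu : MemLp (fun ω => B ω * ε ω) 2 μ := hε.mul' hB
  have hv : MemLp (fun ω => B ω * ε ω + Q ω) 2 μ := hu.add hQ
  have hvu : Integrable (fun ω => (B ω * ε ω + Q ω) * (B ω * ε ω)) μ := hv.integrable_mul hu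
  have hvQ : Integrable (fun ω => (B ω * ε ω + Q ω) * Q ω) μ := hv.integrable_mul hQ
  have hvQ_eq := integral_mul_add_smul_eq hm hBm hB hε hε₀ hQ hQm hQ
  simp only [smul_eq_mul, ← sq] at hvQ_eq
  calc ∫ ω, (B ω * ε ω + Q ω) ^ 2 ∂μ
      = ∫ ω, ((B ω * ε ω + Q ω) * (B ω * ε ω) + (B ω * ε ω + Q ω) * Q ω) ∂μ := by
        congr 1; funext ω; ring
    _ = ∫ ω, (B ω * ε ω) ^ 2 ∂μ + ∫ ω, Q ω ^ 2 ∂μ := by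
        rw [integral_add hvu hvQ, integral_mul_add_mul_self hm hBm hB hε hε₀ hQm hQ, hvQ_eq]

theorem integral_mul_add_smul_sub_smul_eq_zero (hm : m ≤ mΩ) (hBm : StronglyMeasurable[m] B)
    (hB : MemLp B ∞ μ) (hε : MemLp ε 2 μ) (hε₀ : μ[ε|m] =ᵐ[μ] 0) (hQm : StronglyMeasurable[m] Q)
    (hQ : MemLp Q 2 μ) {t : ℝ} (ht : ∫ ω, (B ω * ε ω) ^ 2 ∂μ = t) (ht₀ : t ≠ 0) {Γ : Ω → E}
    (hΓm : StronglyMeasurable[m] Γ) (hΓ : MemLp Γ 2 μ) :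
    ∫ ω, (B ω * ε ω + Q ω) •
      (Γ ω - (t⁻¹ * (B ω * ε ω)) • ∫ ω', Q ω' • Γ ω' ∂μ) ∂μ = 0 := by
  have hu : MemLp (fun ω => B ω * ε ω) 2 μ := hε.mul' hB
  rw [← integral_mul_add_smul_eq hm hBm hB hε hε₀ hQ hΓm hΓ]
  refine integral_smul_sub_smul_integral_smul_eq_zero (hu.add hQ) (hu.const_mul _) hΓ ?_
  simp only [mul_left_comm _ t⁻¹]
  rw [integral_const_mul, integral_mul_add_mul_self hm hBm hB hε hε₀ hQm hQ, ht,
    inv_mul_cancel₀ ht₀]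

end Residual

section Precision

variable {Ω : Type*} {mΩ : MeasurableSpace Ω} {P : Measure Ω}
  {mG mH : MeasurableSpace Ω} {ε W T : Ω → ℝ} {c₁ c₂ : ℝ}

theorem ae_precision_mem_Icc (hc₁ : 0 < c₁)
    (hvar : ∀ᵐ ω ∂P, P[fun ω => ε ω ^ 2|mH] ω ∈ Icc c₁ c₂)
    (hW : W = fun ω => (P[fun ω => ε ω ^ 2|mH] ω)⁻¹) :
    ∀ᵐ ω ∂P, W ω ∈ Icc c₂⁻¹ c₁⁻¹ :=
  hW ▸ hvar.mono fun _ => inv_mem_Icc_inv hc₁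

theorem stronglyMeasurable_precision (hW : W = fun ω => (P[fun ω => ε ω ^ 2|mH] ω)⁻¹) :
    StronglyMeasurable[mH] W :=
  hW ▸ stronglyMeasurable_condExp.measurable.inv.stronglyMeasurable

theorem memLp_top_precision (hHF : mH ≤ mΩ) (hc₁ : 0 < c₁)
    (hvar : ∀ᵐ ω ∂P, P[fun ω => ε ω ^ 2|mH] ω ∈ Icc c₁ c₂)
    (hW : W = fun ω => (P[fun ω => ε ω ^ 2|mH] ω)⁻¹) : MemLp W ∞ P :=
  memLp_top_of_ae_mem_Icc ((stronglyMeasurable_precision hW).mono hHF).aestronglyMeasurable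
    (ae_precision_mem_Icc hc₁ hvar hW)

theorem ae_inv_condExp_precision_mem_Icc [IsProbabilityMeasure P] (hGH : mG ≤ mH)
    (hHF : mH ≤ mΩ) (hc₁ : 0 < c₁) (hvar : ∀ᵐ ω ∂P, P[fun ω => ε ω ^ 2|mH] ω ∈ Icc c₁ c₂)
    (hW : W = fun ω => (P[fun ω => ε ω ^ 2|mH] ω)⁻¹) (hT : T = P[W|mG]) :
    ∀ᵐ ω ∂P, (T ω)⁻¹ ∈ Icc c₁ c₂ := by
  have hc₂ : 0 < c₂ := let ⟨_, h⟩ := hvar.exists; hc₁.trans_le (h.1.trans h.2)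
  have hT_mem := ae_condExp_mem_Icc (m := mG) (hGH.trans hHF)
    ((memLp_top_precision hHF hc₁ hvar hW).integrable le_top)
    (ae_precision_mem_Icc hc₁ hvar hW)
  filter_upwards [hT_mem] with ω h
  simpa only [hT, inv_inv] using inv_mem_Icc_inv (inv_pos.2 hc₂) h

theorem memLp_top_inv_condExp_precision [IsProbabilityMeasure P] (hGH : mG ≤ mH)
    (hHF : mH ≤ mΩ) (hc₁ : 0 < c₁) (hvar : ∀ᵐ ω ∂P, P[fun ω => ε ω ^ 2|mH] ω ∈ Icc c₁ c₂)
    (hW : W = fun ω => (P[fun ω => ε ω ^ 2|mH] ω)⁻¹) (hT : T = P[W|mG]) :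
    MemLp (fun ω => (T ω)⁻¹) ∞ P :=
  memLp_top_of_ae_mem_Icc
    ((hT ▸ stronglyMeasurable_condExp).measurable.inv.stronglyMeasurable.mono
      (hGH.trans hHF)).aestronglyMeasurable
    (ae_inv_condExp_precision_mem_Icc hGH hHF hc₁ hvar hW hT)

theorem stronglyMeasurable_inv_mul_precision (hGH : mG ≤ mH)
    (hW : W = fun ω => (P[fun ω => ε ω ^ 2|mH] ω)⁻¹) (hT : T = P[W|mG]) :
    StronglyMeasurable[mH] fun ω => (T ω)⁻¹ * W ω :=
  ((hT ▸ stronglyMeasurable_condExp).measurable.inv.stronglyMeasurable.mono hGH).mul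
    (stronglyMeasurable_precision hW)

theorem memLp_top_inv_mul_precision [IsProbabilityMeasure P] (hGH : mG ≤ mH) (hHF : mH ≤ mΩ)
    (hc₁ : 0 < c₁) (hvar : ∀ᵐ ω ∂P, P[fun ω => ε ω ^ 2|mH] ω ∈ Icc c₁ c₂)
    (hW : W = fun ω => (P[fun ω => ε ω ^ 2|mH] ω)⁻¹) (hT : T = P[W|mG]) :
    MemLp (fun ω => (T ω)⁻¹ * W ω) ∞ P :=
  (memLp_top_precision hHF hc₁ hvar hW).mul' (r := ∞)
    (memLp_top_inv_condExp_precision hGH hHF hc₁ hvar hW hT)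

theorem integral_inv_condExp_precision_pos [IsProbabilityMeasure P] (hGH : mG ≤ mH)
    (hHF : mH ≤ mΩ) (hc₁ : 0 < c₁) (hvar : ∀ᵐ ω ∂P, P[fun ω => ε ω ^ 2|mH] ω ∈ Icc c₁ c₂)
    (hW : W = fun ω => (P[fun ω => ε ω ^ 2|mH] ω)⁻¹) (hT : T = P[W|mG]) :
    0 < ∫ ω, (T ω)⁻¹ ∂P := by
  have h := integral_mono_ae (integrable_const c₁)
    ((memLp_top_inv_condExp_precision hGH hHF hc₁ hvar hW hT).integrable le_top)
    ((ae_inv_condExp_precision_mem_Icc hGH hHF hc₁ hvar hW hT).mono fun _ h => h.1)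
  rw [integral_const, probReal_univ, one_smul] at h
  exact hc₁.trans_le h

theorem integral_inv_condExp_precision_mul_sq [IsProbabilityMeasure P] (hGH : mG ≤ mH)
    (hHF : mH ≤ mΩ) (hε : MemLp ε 2 P) (hc₁ : 0 < c₁)
    (hvar : ∀ᵐ ω ∂P, P[fun ω => ε ω ^ 2|mH] ω ∈ Icc c₁ c₂)
    (hW : W = fun ω => (P[fun ω => ε ω ^ 2|mH] ω)⁻¹) (hT : T = P[W|mG]) :
    ∫ ω, ((T ω)⁻¹ * W ω * ε ω) ^ 2 ∂P = ∫ ω, (T ω)⁻¹ ∂P := by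
  have hW_top := memLp_top_precision hHF hc₁ hvar hW
  have hTinv_top := memLp_top_inv_condExp_precision hGH hHF hc₁ hvar hW hT
  have hTinv := ae_inv_condExp_precision_mem_Icc hGH hHF hc₁ hvar hW hT
  have hB := memLp_top_inv_mul_precision hGH hHF hc₁ hvar hW hT
  have hB2 : MemLp (fun ω => ((T ω)⁻¹ * W ω) ^ 2) ∞ P := by
    simpa only [sq] using hB.mul' (r := ∞) hB
  have hTinv2 : MemLp (fun ω => (T ω)⁻¹ ^ 2) ∞ P := by
    simpa only [sq] using hTinv_top.mul' (r := ∞) hTinv_top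
  have hε2 : Integrable (fun ω => ε ω ^ 2) P := hε.integrable_sq
  have hTm : StronglyMeasurable[mG] fun ω => (T ω)⁻¹ :=
    (hT ▸ stronglyMeasurable_condExp).measurable.inv.stronglyMeasurable
  calc ∫ ω, ((T ω)⁻¹ * W ω * ε ω) ^ 2 ∂P
      = ∫ ω, ε ω ^ 2 • ((T ω)⁻¹ * W ω) ^ 2 ∂P := by
        congr 1; funext ω; rw [smul_eq_mul]; ring
    _ = ∫ ω, P[fun ω => ε ω ^ 2|mH] ω • ((T ω)⁻¹ * W ω) ^ 2 ∂P :=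
        (integral_condExp_smul_of_stronglyMeasurable_right hHF hε2
          (hε2.smul_of_top_left hB2)
          ((stronglyMeasurable_inv_mul_precision hGH hW hT).pow 2)).symm
    _ = ∫ ω, W ω • ((T ω)⁻¹) ^ 2 ∂P := by
        refine integral_congr_ae (hvar.mono fun ω h => ?_)
        have : P[fun ω => ε ω ^ 2|mH] ω ≠ 0 := (hc₁.trans_le h.1).ne'
        simp only [hW, smul_eq_mul]; field_simp
    _ = ∫ ω, T ω • ((T ω)⁻¹) ^ 2 ∂P := by
        have h := integral_condExp_smul_of_stronglyMeasurable_right (hGH.trans hHF)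
          (hW_top.integrable le_top) ((hW_top.integrable le_top).smul_of_top_left hTinv2)
          (hTm.pow 2)
        rw [← hT] at h
        exact h.symm
    _ = ∫ ω, (T ω)⁻¹ ∂P := by
        refine integral_congr_ae (hTinv.mono fun ω h => ?_)
        have : T ω ≠ 0 := (inv_pos.1 (hc₁.trans_le h.1)).ne'
        simp only [smul_eq_mul]; field_simp

end Precision

/-- Lemma S-(A4.2a): with `V₀ = E[ε₀²]` and `b = E[Q·D]/V₀`,
(i) `V₀ = T* + E[Q²]`; (ii) `ε₀` is orthogonal (componentwise) to every element of
`Λ̃⁽³⁾`; (iii) `D − b·ε₀ ∈ Λ̃⁽³⁾`; hence the projection of `D` onto `Λ̃⁽³⁾^⊥` is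
`E[Q·D]·V₀⁻¹·ε₀`. -/
theorem projection_onto_Lambda3tilde_perp
    {Ω : Type*} {mΩ : MeasurableSpace Ω} (P : Measure Ω) [IsProbabilityMeasure P]
    {p : ℕ} {mG mH : MeasurableSpace Ω} (hGH : mG ≤ mH) (hHF : mH ≤ mΩ)
    (ε : Ω → ℝ) (hε : MemLp ε 2 P) (hεH : P[ε|mH] =ᵐ[P] 0)
    (c₁ c₂ : ℝ) (hc₁ : 0 < c₁)
    (hvar : ∀ᵐ ω ∂P, c₁ ≤ (P[fun ω => ε ω ^ 2|mH]) ω ∧ (P[fun ω => ε ω ^ 2|mH]) ω ≤ c₂)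
    (Q : Ω → ℝ) (hQmeas : StronglyMeasurable[mG] Q) (hQ2 : MemLp Q 2 P)
    (hQ0 : ∫ ω, Q ω ∂P = 0)
    (W T : Ω → ℝ) (Tstar : ℝ) (ε₀ : Ω → ℝ)
    (hW : W = fun ω => ((P[fun ω => ε ω ^ 2|mH]) ω)⁻¹)
    (hT : T = P[W|mG]) (hTstar : Tstar = ∫ ω, (T ω)⁻¹ ∂P)
    (hε₀ : ε₀ = fun ω => (T ω)⁻¹ * W ω * ε ω + Q ω)
    (Λ3t : Set (Ω → EuclideanSpace ℝ (Fin p)))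
    (hΛ3t : Λ3t = {g | ∃ Γs : Ω → EuclideanSpace ℝ (Fin p),
      StronglyMeasurable[mG] Γs ∧ MemLp Γs 2 P ∧ (∫ ω, Γs ω ∂P) = 0 ∧
      MemLp g 2 P ∧
      g = fun ω => Γs ω - ((Tstar * T ω)⁻¹ * (W ω * ε ω)) • (∫ ω', Q ω' • Γs ω' ∂P)})
    (D : Ω → EuclideanSpace ℝ (Fin p)) (hD : StronglyMeasurable[mG] D)
    (hD2 : MemLp D 2 P) (hD0 : (∫ ω, D ω ∂P) = 0)
    (V₀ : ℝ) (hV₀ : V₀ = ∫ ω, ε₀ ω ^ 2 ∂P)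
    (b : EuclideanSpace ℝ (Fin p)) (hb : b = V₀⁻¹ • ∫ ω, Q ω • D ω ∂P) :
    -- (i) V₀ = T* + E[Q²]
    (V₀ = Tstar + ∫ ω, Q ω ^ 2 ∂P) ∧
    -- (ii) ε₀ is orthogonal (componentwise) to every element of Λ̃⁽³⁾
    (∀ g ∈ Λ3t, (∫ ω, ε₀ ω • g ω ∂P) = (0 : EuclideanSpace ℝ (Fin p))) ∧
    -- (iii) D − b·ε₀ ∈ Λ̃⁽³⁾
    (fun ω => D ω - ε₀ ω • b) ∈ Λ3t := by
  have hB := memLp_top_inv_mul_precision hGH hHF hc₁ hvar hW hT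
  have hBm := stronglyMeasurable_inv_mul_precision hGH hW hT
  have hQm : StronglyMeasurable[mH] Q := hQmeas.mono hGH
  have hTstar_pos : 0 < Tstar :=
    hTstar ▸ integral_inv_condExp_precision_pos hGH hHF hc₁ hvar hW hT
  have hu_sq : ∫ ω, ((T ω)⁻¹ * W ω * ε ω) ^ 2 ∂P = Tstar :=
    hTstar ▸ integral_inv_condExp_precision_mul_sq hGH hHF hε hc₁ hvar hW hT
  have hV₀' : V₀ = Tstar + ∫ ω, Q ω ^ 2 ∂P := by
    rw [hV₀, hε₀, ← hu_sq]
    exact integral_mul_add_sq hHF hBm hB hε hεH hQm hQ2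
  have hV₀_pos : 0 < V₀ :=
    hV₀' ▸ hTstar_pos.trans_le (le_add_of_nonneg_right (integral_nonneg fun ω => sq_nonneg _))
  have hcoef (ω : Ω) :
      (Tstar * T ω)⁻¹ * (W ω * ε ω) = Tstar⁻¹ * ((T ω)⁻¹ * W ω * ε ω) := by
    rw [mul_inv]; ring
  refine ⟨hV₀', ?_, ?_⟩
  · rintro g hg
    obtain ⟨Γ, hΓm, hΓ, -, -, rfl⟩ := hΛ3t ▸ hg
    simp_rw [hcoef, hε₀]
    exact integral_mul_add_smul_sub_smul_eq_zero hHF hBm hB hε hεH hQm hQ2 hu_sq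
      hTstar_pos.ne' (hΓm.mono hGH) hΓ
  · rw [hΛ3t, hε₀]
    refine ⟨fun ω => D ω - Q ω • b, hD.sub (hQmeas.smul_const b),
      hD2.sub ((memLp_top_const b).smul hQ2), integral_sub_smul_const_eq_zero
        (hD2.integrable one_le_two) (hQ2.integrable one_le_two) hD0 hQ0 b,
      hD2.sub ((memLp_top_const b).smul ((hε.mul' hB).add hQ2)), ?_⟩
    simp_rw [hcoef]
    refine sub_add_smul_eq_sub_smul_integral_smul_sub hTstar_pos.ne' hD2 hQ2 ?_
    rw [hb, smul_smul, ← hV₀', mul_inv_cancel₀ hV₀_pos.ne', one_smul]
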